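/- Let (L_{mn}) be a double sequence of positive linear operators from C_{2π}(ℝ²) (real-valued continuous functions on ℝ², 2π-periodic in each variable, with sup norm) into itself. If ‖L_{mn}(f_i) − f_i‖ → 0 as m,n → ∞ for the five test functions f_0 = 1, f_1(x,y) = sin x, f_2(x,y) = sin y, f_3(x,y) = cos x, f_4(x,y) = cos y, then ‖L_{mn}(f) − f‖ → 0 for every f ∈ C_{2π}(ℝ²). -/

import Mathlib

open Real

/-- Membership in `C_{2π}(ℝ²)`: continuous and `2π`-periodic in each variable. -/
def Cper (f : ℝ × ℝ → ℝ) : Prop :=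
  Continuous f ∧ ∀ x y : ℝ, f (x + 2 * π, y) = f (x, y) ∧ f (x, y + 2 * π) = f (x, y)

/-- Uniform convergence of a double sequence of functions (sup-norm convergence). -/
def UnifConv2 (g : ℕ → ℕ → ℝ × ℝ → ℝ) (h : ℝ × ℝ → ℝ) : Prop :=
  ∀ ε : ℝ, 0 < ε → ∃ N : ℕ, ∀ m n : ℕ, N ≤ m → N ≤ n → ∀ p : ℝ × ℝ, |g m n p - h p| < ε

lemma cper_one : Cper (fun _ => (1:ℝ)) := ⟨continuous_const, fun _ _ => ⟨rfl, rfl⟩⟩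

lemma cper_sin1 : Cper (fun p : ℝ × ℝ => sin p.1) :=
  ⟨Real.continuous_sin.comp continuous_fst, fun x y => ⟨by simp [Real.sin_add_two_pi], rfl⟩⟩

lemma cper_sin2 : Cper (fun p : ℝ × ℝ => sin p.2) :=
  ⟨Real.continuous_sin.comp continuous_snd, fun x y => ⟨rfl, by simp [Real.sin_add_two_pi]⟩⟩

lemma cper_cos1 : Cper (fun p : ℝ × ℝ => cos p.1) :=
  ⟨Real.continuous_cos.comp continuous_fst, fun x y => ⟨by simp [Real.cos_add_two_pi], rfl⟩⟩

lemma cper_cos2 : Cper (fun p : ℝ × ℝ => cos p.2) :=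
  ⟨Real.continuous_cos.comp continuous_snd, fun x y => ⟨rfl, by simp [Real.cos_add_two_pi]⟩⟩

lemma cper_comb {f g : ℝ × ℝ → ℝ} (a b : ℝ) (hf : Cper f) (hg : Cper g) :
    Cper (fun p => a * f p + b * g p) := by
  refine ⟨((continuous_const.mul hf.1).add (continuous_const.mul hg.1)), fun x y => ?_⟩
  obtain ⟨hf1, hf2⟩ := hf.2 x y
  obtain ⟨hg1, hg2⟩ := hg.2 x y
  exact ⟨by simp [hf1, hg1], by simp [hf2, hg2]⟩

/-- periodicity with integer multiples, first coordinate -/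
lemma cper_int1 {f : ℝ × ℝ → ℝ} (hf : Cper f) (x y : ℝ) (k : ℤ) :
    f (x + 2 * π * k, y) = f (x, y) := by
  have hp : Function.Periodic (fun t => f (t, y)) (2 * π) := fun t => (hf.2 t y).1
  have := (hp.int_mul k) x
  simpa [mul_comm, mul_assoc, mul_left_comm] using this

lemma cper_int2 {f : ℝ × ℝ → ℝ} (hf : Cper f) (x y : ℝ) (k : ℤ) :
    f (x, y + 2 * π * k) = f (x, y) := by
  have hp : Function.Periodic (fun t => f (x, t)) (2 * π) := fun t => (hf.2 x t).2
  have := (hp.int_mul k) y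
  simpa [mul_comm, mul_assoc, mul_left_comm] using this

/-- sin squared of half-angle is invariant under shifting by 2πk -/
lemma sin_sq_shift (t : ℝ) (k : ℤ) : sin ((t + 2 * π * k) / 2) ^ 2 = sin (t / 2) ^ 2 := by
  have : (t + 2 * π * k) / 2 = t / 2 + (k : ℝ) * π := by ring
  rw [this, Real.sin_add_int_mul_pi, mul_pow]
  have : ((-1 : ℝ) ^ k) ^ 2 = 1 := by
    rcases Int.even_or_odd k with h | h
    · rw [h.neg_one_zpow]; norm_num
    · rw [Odd.neg_one_zpow h]; norm_num
  rw [this, one_mul]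

/-- monotonicity: if δ ≤ |t| ≤ π then sin(δ/2)^2 ≤ sin(t/2)^2 -/
lemma sin_sq_mono {t δ : ℝ} (hδ : 0 < δ) (hδπ : δ ≤ π) (h1 : δ ≤ |t|) (h2 : |t| ≤ π) :
    sin (δ / 2) ^ 2 ≤ sin (t / 2) ^ 2 := by
  have h3 : sin (t / 2) ^ 2 = sin (|t| / 2) ^ 2 := by
    rcases abs_cases t with ⟨h, _⟩ | ⟨h, _⟩
    · rw [h]
    · rw [h]; simp [neg_div]
  rw [h3]
  have hs : sin (δ / 2) ≤ sin (|t| / 2) := by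
    rcases eq_or_lt_of_le h1 with h | h
    · rw [h]
    · exact le_of_lt (Real.strictMonoOn_sin
        ⟨by linarith [Real.pi_pos], by linarith⟩
        ⟨by linarith [Real.pi_pos, abs_nonneg t], by linarith⟩ (by linarith))
  have hn : 0 ≤ sin (δ / 2) := Real.sin_nonneg_of_nonneg_of_le_pi (by linarith) (by linarith)
  exact pow_le_pow_left₀ hn hs 2

/-- the reduction map to [0, 2π) -/
noncomputable def redc (t : ℝ) : ℝ := t - 2 * π * ⌊t / (2 * π)⌋

lemma redc_mem (t : ℝ) : 0 ≤ redc t ∧ redc t < 2 * π := by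
  have h2π : (0:ℝ) < 2 * π := by positivity
  have h1 : (⌊t / (2 * π)⌋ : ℝ) * (2 * π) ≤ t :=
    (le_div_iff₀ h2π).mp (Int.floor_le (t / (2 * π)))
  have h2 : t < ((⌊t / (2 * π)⌋ : ℝ) + 1) * (2 * π) :=
    (div_lt_iff₀ h2π).mp (Int.lt_floor_add_one (t / (2 * π)))
  unfold redc
  constructor <;> nlinarith

lemma redc_eq (t : ℝ) : t = redc t + 2 * π * ⌊t / (2 * π)⌋ := by unfold redc; ring

set_option maxHeartbeats 1000000 in
/-- The Korovkin pointwise inequality. -/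
lemma key_bound {f : ℝ × ℝ → ℝ} (hf : Cper f) {M : ℝ} (hM : ∀ p, |f p| ≤ M)
    {ε : ℝ} (hε : 0 < ε) :
    ∃ K, 0 < K ∧ ∀ x y u v,
      |f (u, v) - f (x, y)| ≤ ε + K * (sin ((u - x) / 2) ^ 2 + sin ((v - y) / 2) ^ 2) := by
  have hπ := Real.pi_pos
  -- uniform continuity on the compact square Q
  set Q : Set (ℝ × ℝ) := Set.Icc (-(2 * π)) (4 * π) ×ˢ Set.Icc (-(2 * π)) (4 * π) with hQ
  have hcomp : IsCompact Q := (isCompact_Icc).prod isCompact_Icc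
  have huc : UniformContinuousOn f Q := hcomp.uniformContinuousOn_of_continuous hf.1.continuousOn
  obtain ⟨δ₀, hδ₀, hδ⟩ := (Metric.uniformContinuousOn_iff).mp huc ε hε
  set δ : ℝ := min δ₀ (π / 2) with hδdef
  have hδpos : 0 < δ := lt_min hδ₀ (by linarith)
  have hδπ : δ ≤ π := le_trans (min_le_right _ _) (by linarith)
  have hsδ : 0 < sin (δ / 2) ^ 2 := by
    have : 0 < sin (δ / 2) := Real.sin_pos_of_pos_of_lt_pi (by linarith) (by linarith)
    positivity
  have hM0 : 0 ≤ M := le_trans (abs_nonneg _) (hM (0, 0))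
  refine ⟨2 * M / sin (δ / 2) ^ 2 + 1, by positivity, fun x y u v => ?_⟩
  set K := 2 * M / sin (δ / 2) ^ 2 + 1 with hK
  -- reduce x, y to [0, 2π)
  set x' := redc x with hx'
  set y' := redc y with hy'
  obtain ⟨hx'0, hx'2⟩ := redc_mem x
  obtain ⟨hy'0, hy'2⟩ := redc_mem y
  have hfx : f (x, y) = f (x', y') := by
    conv_lhs => rw [redc_eq x, redc_eq y]
    rw [show ((redc x + 2*π*⌊x/(2*π)⌋ : ℝ), (redc y + 2*π*⌊y/(2*π)⌋ : ℝ))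
        = ((x' + 2*π*(⌊x/(2*π)⌋:ℤ) : ℝ), (y' + 2*π*(⌊y/(2*π)⌋:ℤ) : ℝ)) from rfl]
    rw [cper_int1 hf _ _ _, cper_int2 hf _ _ _]
  -- reduce u, v near x', y'
  set ku : ℤ := ⌊(u - x' + π) / (2 * π)⌋ with hku
  set kv : ℤ := ⌊(v - y' + π) / (2 * π)⌋ with hkv
  set u' := u - 2 * π * ku with hu'
  set v' := v - 2 * π * kv with hv'
  have h2π : (0:ℝ) < 2 * π := by positivity
  have hub : -π ≤ u' - x' ∧ u' - x' < π := by
    have h1 : (ku : ℝ) * (2 * π) ≤ u - x' + π :=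
      (le_div_iff₀ h2π).mp (Int.floor_le ((u - x' + π) / (2 * π)))
    have h2 : u - x' + π < ((ku : ℝ) + 1) * (2 * π) :=
      (div_lt_iff₀ h2π).mp (Int.lt_floor_add_one ((u - x' + π) / (2 * π)))
    rw [hu']
    constructor <;> nlinarith
  have hvb : -π ≤ v' - y' ∧ v' - y' < π := by
    have h1 : (kv : ℝ) * (2 * π) ≤ v - y' + π :=
      (le_div_iff₀ h2π).mp (Int.floor_le ((v - y' + π) / (2 * π)))
    have h2 : v - y' + π < ((kv : ℝ) + 1) * (2 * π) :=
      (div_lt_iff₀ h2π).mp (Int.lt_floor_add_one ((v - y' + π) / (2 * π)))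
    rw [hv']
    constructor <;> nlinarith
  have hfu : f (u, v) = f (u', v') := by
    have e1 : u = u' + 2 * π * (ku : ℝ) := by rw [hu']; ring
    have e2 : v = v' + 2 * π * (kv : ℝ) := by rw [hv']; ring
    rw [e1, e2, cper_int1 hf _ _ _, cper_int2 hf _ _ _]
  have hsu : sin ((u - x) / 2) ^ 2 = sin ((u' - x') / 2) ^ 2 := by
    have e : u - x = (u' - x') + 2 * π * ((ku - ⌊x / (2*π)⌋ : ℤ) : ℝ) := by
      push_cast
      rw [hu', hx']
      linarith [redc_eq x]
    rw [e]
    exact_mod_cast sin_sq_shift (u' - x') (ku - ⌊x / (2*π)⌋)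
  have hsv : sin ((v - y) / 2) ^ 2 = sin ((v' - y') / 2) ^ 2 := by
    have e : v - y = (v' - y') + 2 * π * ((kv - ⌊y / (2*π)⌋ : ℤ) : ℝ) := by
      push_cast
      rw [hv', hy']
      linarith [redc_eq y]
    rw [e]
    exact_mod_cast sin_sq_shift (v' - y') (kv - ⌊y / (2*π)⌋)
  have hnn : 0 ≤ sin ((u - x) / 2) ^ 2 + sin ((v - y) / 2) ^ 2 := by positivity
  have hKpos : 0 < K := by rw [hK]; positivity
  clear_value Q δ x' y' ku kv u' v' K
  rw [hfx, hfu]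
  by_cases hcase : |u' - x'| < δ ∧ |v' - y'| < δ
  · -- close case: uniform continuity
    have hδδ₀ : δ ≤ δ₀ := by rw [hδdef]; exact min_le_left _ _
    have hxQ : (x', y') ∈ Q := by
      simp only [hQ, Set.mem_prod, Set.mem_Icc, hx', hy']
      refine ⟨⟨by linarith, by linarith⟩, by linarith, by linarith⟩
    have h1 := abs_lt.mp hcase.1
    have h2 := abs_lt.mp hcase.2
    have huQ : (u', v') ∈ Q := by
      simp only [hQ, Set.mem_prod, Set.mem_Icc]
      have e1 : x' = redc x := hx'
      have e2 : y' = redc y := hy'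
      refine ⟨⟨by linarith, by linarith⟩, by linarith, by linarith⟩
    have hd : dist ((u', v') : ℝ × ℝ) ((x', y') : ℝ × ℝ) < δ₀ := by
      rw [Prod.dist_eq]
      have d1 : dist u' x' < δ := by rw [Real.dist_eq]; exact hcase.1
      have d2 : dist v' y' < δ := by rw [Real.dist_eq]; exact hcase.2
      exact max_lt (d1.trans_le hδδ₀) (d2.trans_le hδδ₀)
    have hcl := hδ _ huQ _ hxQ hd
    rw [Real.dist_eq] at hcl
    have hK0 : 0 ≤ K * (sin ((u - x) / 2) ^ 2 + sin ((v - y) / 2) ^ 2) :=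
      mul_nonneg hKpos.le hnn
    linarith [hcl.le]
  · -- far case: use the sin² lower bound
    push_neg at hcase
    have hbig : sin (δ / 2) ^ 2 ≤ sin ((u - x) / 2) ^ 2 + sin ((v - y) / 2) ^ 2 := by
      rw [hsu, hsv]
      by_cases h : |u' - x'| < δ
      · have h2 := hcase h
        have := sin_sq_mono hδpos hδπ h2 (abs_le.mpr ⟨hvb.1, hvb.2.le⟩)
        nlinarith [sq_nonneg (sin ((u' - x') / 2))]
      · push_neg at h
        have := sin_sq_mono hδpos hδπ h (abs_le.mpr ⟨hub.1, hub.2.le⟩)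
        nlinarith [sq_nonneg (sin ((v' - y') / 2))]
    have habs : |f (u', v') - f (x', y')| ≤ 2 * M := by
      have ha := abs_le.mp (hM (u', v'))
      have hb := abs_le.mp (hM (x', y'))
      rw [abs_le]
      constructor <;> linarith
    have hKs : K * sin (δ / 2) ^ 2 = 2 * M + sin (δ / 2) ^ 2 := by
      rw [hK, add_mul, div_mul_cancel₀ _ hsδ.ne', one_mul]
    have hmul : K * sin (δ / 2) ^ 2 ≤ K * (sin ((u - x) / 2) ^ 2 + sin ((v - y) / 2) ^ 2) :=
      mul_le_mul_of_nonneg_left hbig hKpos.le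
    linarith

lemma cper_redc {f : ℝ × ℝ → ℝ} (hf : Cper f) (x y : ℝ) :
    f (x, y) = f (redc x, redc y) := by
  conv_lhs => rw [redc_eq x, redc_eq y]
  rw [show ((redc x + 2*π*⌊x/(2*π)⌋ : ℝ), (redc y + 2*π*⌊y/(2*π)⌋ : ℝ))
      = ((redc x + 2*π*((⌊x/(2*π)⌋:ℤ):ℝ) : ℝ), (redc y + 2*π*((⌊y/(2*π)⌋:ℤ):ℝ) : ℝ)) from rfl]
  rw [cper_int1 hf _ _ _, cper_int2 hf _ _ _]

lemma cper_bound {f : ℝ × ℝ → ℝ} (hf : Cper f) : ∃ M, 0 ≤ M ∧ ∀ p, |f p| ≤ M := by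
  have hπ := Real.pi_pos
  have hcomp : IsCompact ((Set.Icc (0:ℝ) (2*π)) ×ˢ (Set.Icc (0:ℝ) (2*π))) :=
    isCompact_Icc.prod isCompact_Icc
  obtain ⟨C, hC⟩ := hcomp.exists_bound_of_continuousOn hf.1.continuousOn
  refine ⟨max C 0, le_max_right _ _, fun p => ?_⟩
  obtain ⟨x, y⟩ := p
  rw [cper_redc hf x y]
  have hmem : ((redc x, redc y) : ℝ × ℝ) ∈ (Set.Icc (0:ℝ) (2*π)) ×ˢ (Set.Icc (0:ℝ) (2*π)) := by
    obtain ⟨h1, h2⟩ := redc_mem x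
    obtain ⟨h3, h4⟩ := redc_mem y
    exact ⟨⟨h1, h2.le⟩, ⟨h3, h4.le⟩⟩
  calc |f (redc x, redc y)| = ‖f (redc x, redc y)‖ := (Real.norm_eq_abs _).symm
    _ ≤ C := hC _ hmem
    _ ≤ max C 0 := le_max_left _ _

lemma cper_trig (a0 a1 a2 a3 a4 : ℝ) :
    Cper (fun u : ℝ × ℝ =>
      a0 * 1 + (a1 * sin u.1 + a2 * cos u.1) + (a3 * sin u.2 + a4 * cos u.2)) := by
  constructor
  · fun_prop
  · intro x y
    simp [Real.sin_add_two_pi, Real.cos_add_two_pi]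

lemma expandL (L : ℕ → ℕ → (ℝ × ℝ → ℝ) → (ℝ × ℝ → ℝ))
    (hlin : ∀ m n (a b : ℝ) f g, Cper f → Cper g →
      L m n (fun p => a * f p + b * g p) = fun p => a * L m n f p + b * L m n g p)
    (m n : ℕ) (a0 a1 a2 a3 a4 : ℝ) :
    L m n (fun u => a0 * 1 + (a1 * sin u.1 + a2 * cos u.1) + (a3 * sin u.2 + a4 * cos u.2))
      = fun u => a0 * L m n (fun _ => 1) u
          + (a1 * L m n (fun p => sin p.1) u + a2 * L m n (fun p => cos p.1) u)
          + (a3 * L m n (fun p => sin p.2) u + a4 * L m n (fun p => cos p.2) u) := by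
  have hF1 : Cper (fun v : ℝ × ℝ => a1 * sin v.1 + a2 * cos v.1) :=
    cper_comb a1 a2 cper_sin1 cper_cos1
  have hF2 : Cper (fun v : ℝ × ℝ => a3 * sin v.2 + a4 * cos v.2) :=
    cper_comb a3 a4 cper_sin2 cper_cos2
  have eF1 : L m n (fun v : ℝ × ℝ => a1 * sin v.1 + a2 * cos v.1)
      = fun u => a1 * L m n (fun p : ℝ × ℝ => sin p.1) u
          + a2 * L m n (fun p : ℝ × ℝ => cos p.1) u :=
    hlin m n a1 a2 _ _ cper_sin1 cper_cos1
  have eF2 : L m n (fun v : ℝ × ℝ => a3 * sin v.2 + a4 * cos v.2)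
      = fun u => a3 * L m n (fun p : ℝ × ℝ => sin p.2) u
          + a4 * L m n (fun p : ℝ × ℝ => cos p.2) u :=
    hlin m n a3 a4 _ _ cper_sin2 cper_cos2
  have hF3 : Cper (fun v : ℝ × ℝ => a0 * 1 + 1 * (a1 * sin v.1 + a2 * cos v.1)) :=
    cper_comb a0 1 cper_one hF1
  have eF3 : L m n (fun v : ℝ × ℝ => a0 * 1 + 1 * (a1 * sin v.1 + a2 * cos v.1))
      = fun u => a0 * L m n (fun _ : ℝ × ℝ => (1:ℝ)) u
          + 1 * L m n (fun v : ℝ × ℝ => a1 * sin v.1 + a2 * cos v.1) u :=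
    hlin m n a0 1 _ _ cper_one hF1
  have eFull : L m n (fun v : ℝ × ℝ =>
        1 * (a0 * 1 + 1 * (a1 * sin v.1 + a2 * cos v.1)) + 1 * (a3 * sin v.2 + a4 * cos v.2))
      = fun u => 1 * L m n (fun v : ℝ × ℝ => a0 * 1 + 1 * (a1 * sin v.1 + a2 * cos v.1)) u
          + 1 * L m n (fun v : ℝ × ℝ => a3 * sin v.2 + a4 * cos v.2) u :=
    hlin m n 1 1 _ _ hF3 hF2
  calc L m n (fun u => a0 * 1 + (a1 * sin u.1 + a2 * cos u.1) + (a3 * sin u.2 + a4 * cos u.2))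
      = L m n (fun v : ℝ × ℝ =>
          1 * (a0 * 1 + 1 * (a1 * sin v.1 + a2 * cos v.1)) + 1 * (a3 * sin v.2 + a4 * cos v.2)) :=
        congrArg (L m n) (by funext u; ring)
    _ = fun u => 1 * L m n (fun v : ℝ × ℝ => a0 * 1 + 1 * (a1 * sin v.1 + a2 * cos v.1)) u
          + 1 * L m n (fun v : ℝ × ℝ => a3 * sin v.2 + a4 * cos v.2) u := eFull
    _ = _ := by
        funext u
        simp only [eF3, eF2, eF1]
        ring

set_option maxHeartbeats 1000000 in
theorem stmt4 (L : ℕ → ℕ → (ℝ × ℝ → ℝ) → (ℝ × ℝ → ℝ))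
    (hmaps : ∀ m n f, Cper f → Cper (L m n f))
    (hlin : ∀ m n (a b : ℝ) f g, Cper f → Cper g →
      L m n (fun p => a * f p + b * g p) = fun p => a * L m n f p + b * L m n g p)
    (hpos : ∀ m n f g, Cper f → Cper g → (∀ p, f p ≤ g p) → ∀ p, L m n f p ≤ L m n g p)
    (h0 : UnifConv2 (fun m n => L m n fun _ => 1) fun _ => 1)
    (h1 : UnifConv2 (fun m n => L m n fun p => sin p.1) fun p => sin p.1)
    (h2 : UnifConv2 (fun m n => L m n fun p => sin p.2) fun p => sin p.2)
    (h3 : UnifConv2 (fun m n => L m n fun p => cos p.1) fun p => cos p.1)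
    (h4 : UnifConv2 (fun m n => L m n fun p => cos p.2) fun p => cos p.2) :
    ∀ f, Cper f → UnifConv2 (fun m n => L m n f) f := by
  intro f hf ε hε
  obtain ⟨M, hM0, hM⟩ := cper_bound hf
  obtain ⟨K, hKpos, hkey⟩ := key_bound hf hM (show (0:ℝ) < ε/4 by linarith)
  have hC : (0:ℝ) < M + ε/4 + 3*K + 1 := by linarith
  set C : ℝ := M + ε/4 + 3*K + 1 with hCdef
  set η : ℝ := ε / (4*C) with hηdef
  have hη : 0 < η := div_pos hε (by linarith)
  obtain ⟨N0, hN0⟩ := h0 η hη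
  obtain ⟨N1, hN1⟩ := h1 η hη
  obtain ⟨N2, hN2⟩ := h2 η hη
  obtain ⟨N3, hN3⟩ := h3 η hη
  obtain ⟨N4, hN4⟩ := h4 η hη
  refine ⟨N0+N1+N2+N3+N4, fun m n hm hn p => ?_⟩
  obtain ⟨x, y⟩ := p
  have hD0 : |L m n (fun _ : ℝ × ℝ => (1:ℝ)) (x, y) - 1| < η :=
    hN0 m n (by omega) (by omega) (x, y)
  have hD1 : |L m n (fun p : ℝ × ℝ => sin p.1) (x, y) - sin x| < η :=
    hN1 m n (by omega) (by omega) (x, y)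
  have hD2 : |L m n (fun p : ℝ × ℝ => sin p.2) (x, y) - sin y| < η :=
    hN2 m n (by omega) (by omega) (x, y)
  have hD3 : |L m n (fun p : ℝ × ℝ => cos p.1) (x, y) - cos x| < η :=
    hN3 m n (by omega) (by omega) (x, y)
  have hD4 : |L m n (fun p : ℝ × ℝ => cos p.2) (x, y) - cos y| < η :=
    hN4 m n (by omega) (by omega) (x, y)
  set c1 := L m n (fun _ : ℝ × ℝ => (1:ℝ)) (x, y) with hc1
  set s1 := L m n (fun p : ℝ × ℝ => sin p.1) (x, y) with hs1
  set s2 := L m n (fun p : ℝ × ℝ => sin p.2) (x, y) with hs2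
  set co1 := L m n (fun p : ℝ × ℝ => cos p.1) (x, y) with hco1
  set co2 := L m n (fun p : ℝ × ℝ => cos p.2) (x, y) with hco2
  -- trig identities
  have etrig1 : ∀ t : ℝ, sin ((t - x)/2)^2 = 1/2 - (cos t * cos x + sin t * sin x)/2 := by
    intro t
    have h := Real.sin_sq_eq_half_sub ((t - x)/2)
    rw [show 2 * ((t - x)/2) = t - x by ring, Real.cos_sub] at h
    linarith
  have etrig2 : ∀ t : ℝ, sin ((t - y)/2)^2 = 1/2 - (cos t * cos y + sin t * sin y)/2 := by
    intro t
    have h := Real.sin_sq_eq_half_sub ((t - y)/2)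
    rw [show 2 * ((t - y)/2) = t - y by ring, Real.cos_sub] at h
    linarith
  -- upper comparison function
  have hptU : ∀ q : ℝ × ℝ, f q ≤ (f (x,y) + ε/4 + K) * 1
      + ((-(K/2) * sin x) * sin q.1 + (-(K/2) * cos x) * cos q.1)
      + ((-(K/2) * sin y) * sin q.2 + (-(K/2) * cos y) * cos q.2) := by
    intro q
    have hk := hkey x y q.1 q.2
    rw [Prod.mk.eta] at hk
    have egu : (f (x,y) + ε/4 + K) * 1
        + ((-(K/2) * sin x) * sin q.1 + (-(K/2) * cos x) * cos q.1)
        + ((-(K/2) * sin y) * sin q.2 + (-(K/2) * cos y) * cos q.2)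
        = f (x,y) + ε/4 + K * (sin ((q.1 - x)/2)^2 + sin ((q.2 - y)/2)^2) := by
      rw [etrig1 q.1, etrig2 q.2]; ring
    rw [egu]
    have h2 := (abs_le.mp hk).2
    linarith
  have hptL : ∀ q : ℝ × ℝ, (f (x,y) - ε/4 - K) * 1
      + (((K/2) * sin x) * sin q.1 + ((K/2) * cos x) * cos q.1)
      + (((K/2) * sin y) * sin q.2 + ((K/2) * cos y) * cos q.2) ≤ f q := by
    intro q
    have hk := hkey x y q.1 q.2
    rw [Prod.mk.eta] at hk
    have egl : (f (x,y) - ε/4 - K) * 1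
        + (((K/2) * sin x) * sin q.1 + ((K/2) * cos x) * cos q.1)
        + (((K/2) * sin y) * sin q.2 + ((K/2) * cos y) * cos q.2)
        = f (x,y) - ε/4 - K * (sin ((q.1 - x)/2)^2 + sin ((q.2 - y)/2)^2) := by
      rw [etrig1 q.1, etrig2 q.2]; ring
    rw [egl]
    have h2 := (abs_le.mp hk).1
    linarith
  -- apply positivity of L and expand by linearity
  have hLU : L m n f (x, y) ≤ L m n (fun u : ℝ × ℝ => (f (x,y) + ε/4 + K) * 1
      + ((-(K/2) * sin x) * sin u.1 + (-(K/2) * cos x) * cos u.1)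
      + ((-(K/2) * sin y) * sin u.2 + (-(K/2) * cos y) * cos u.2)) (x, y) :=
    hpos m n f _ hf (cper_trig _ _ _ _ _) hptU (x, y)
  have hLL : L m n (fun u : ℝ × ℝ => (f (x,y) - ε/4 - K) * 1
      + (((K/2) * sin x) * sin u.1 + ((K/2) * cos x) * cos u.1)
      + (((K/2) * sin y) * sin u.2 + ((K/2) * cos y) * cos u.2)) (x, y) ≤ L m n f (x, y) :=
    hpos m n _ f (cper_trig _ _ _ _ _) hf hptL (x, y)
  have eU : L m n (fun u : ℝ × ℝ => (f (x,y) + ε/4 + K) * 1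
      + ((-(K/2) * sin x) * sin u.1 + (-(K/2) * cos x) * cos u.1)
      + ((-(K/2) * sin y) * sin u.2 + (-(K/2) * cos y) * cos u.2)) (x, y)
      = (f (x,y) + ε/4 + K) * c1 + ((-(K/2) * sin x) * s1 + (-(K/2) * cos x) * co1)
        + ((-(K/2) * sin y) * s2 + (-(K/2) * cos y) * co2) :=
    congrFun (expandL L hlin m n _ _ _ _ _) (x, y)
  have eL : L m n (fun u : ℝ × ℝ => (f (x,y) - ε/4 - K) * 1
      + (((K/2) * sin x) * sin u.1 + ((K/2) * cos x) * cos u.1)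
      + (((K/2) * sin y) * sin u.2 + ((K/2) * cos y) * cos u.2)) (x, y)
      = (f (x,y) - ε/4 - K) * c1 + (((K/2) * sin x) * s1 + ((K/2) * cos x) * co1)
        + (((K/2) * sin y) * s2 + ((K/2) * cos y) * co2) :=
    congrFun (expandL L hlin m n _ _ _ _ _) (x, y)
  rw [eU] at hLU
  rw [eL] at hLL
  -- algebraic identities isolating the error terms
  have pythx := Real.sin_sq_add_cos_sq x
  have pythy := Real.sin_sq_add_cos_sq y
  have idU : (f (x,y) + ε/4 + K) * c1 + ((-(K/2) * sin x) * s1 + (-(K/2) * cos x) * co1)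
        + ((-(K/2) * sin y) * s2 + (-(K/2) * cos y) * co2)
      = f (x,y) + ε/4 + ((f (x,y) + ε/4 + K) * (c1 - 1)
        + (-(K/2) * sin x) * (s1 - sin x) + (-(K/2) * cos x) * (co1 - cos x)
        + (-(K/2) * sin y) * (s2 - sin y) + (-(K/2) * cos y) * (co2 - cos y)) := by
    linear_combination (-(K/2)) * pythx + (-(K/2)) * pythy
  have idL : (f (x,y) - ε/4 - K) * c1 + (((K/2) * sin x) * s1 + ((K/2) * cos x) * co1)
        + (((K/2) * sin y) * s2 + ((K/2) * cos y) * co2)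
      = f (x,y) - ε/4 + ((f (x,y) - ε/4 - K) * (c1 - 1)
        + ((K/2) * sin x) * (s1 - sin x) + ((K/2) * cos x) * (co1 - cos x)
        + ((K/2) * sin y) * (s2 - sin y) + ((K/2) * cos y) * (co2 - cos y)) := by
    linear_combination (K/2) * pythx + (K/2) * pythy
  -- bounds on the error terms
  have habsf := abs_le.mp (hM (x, y))
  have hK2 : (0:ℝ) ≤ K/2 := by linarith
  have bndA : ∀ a d : ℝ, |a| ≤ M + ε/4 + K → |d| ≤ η → |a * d| ≤ (M + ε/4 + K) * η := by
    intro a d ha hd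
    rw [abs_mul]
    exact mul_le_mul ha hd (abs_nonneg _) (by linarith)
  have bndB : ∀ a d : ℝ, |a| ≤ K/2 → |d| ≤ η → |a * d| ≤ (K/2) * η := by
    intro a d ha hd
    rw [abs_mul]
    exact mul_le_mul ha hd (abs_nonneg _) hK2
  have habsU0 : |f (x,y) + ε/4 + K| ≤ M + ε/4 + K := by
    rw [abs_le]; constructor <;> linarith
  have habsL0 : |f (x,y) - ε/4 - K| ≤ M + ε/4 + K := by
    rw [abs_le]; constructor <;> linarith
  have habs_s : ∀ t : ℝ, |(K/2) * sin t| ≤ K/2 := by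
    intro t
    rw [abs_mul, abs_of_nonneg hK2]
    calc K/2 * |sin t| ≤ K/2 * 1 := mul_le_mul_of_nonneg_left (Real.abs_sin_le_one t) hK2
      _ = K/2 := mul_one _
  have habs_c : ∀ t : ℝ, |(K/2) * cos t| ≤ K/2 := by
    intro t
    rw [abs_mul, abs_of_nonneg hK2]
    calc K/2 * |cos t| ≤ K/2 * 1 := mul_le_mul_of_nonneg_left (Real.abs_cos_le_one t) hK2
      _ = K/2 := mul_one _
  have B0 := bndA _ _ habsU0 hD0.le
  have B0' := bndA _ _ habsL0 hD0.le
  have B1 : |(K/2) * sin x * (s1 - sin x)| ≤ K/2 * η := bndB _ _ (habs_s x) hD1.le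
  have B2 : |(K/2) * cos x * (co1 - cos x)| ≤ K/2 * η := bndB _ _ (habs_c x) hD3.le
  have B3 : |(K/2) * sin y * (s2 - sin y)| ≤ K/2 * η := bndB _ _ (habs_s y) hD2.le
  have B4 : |(K/2) * cos y * (co2 - cos y)| ≤ K/2 * η := bndB _ _ (habs_c y) hD4.le
  have hCη : (M + ε/4 + K) * η + 4 * ((K/2) * η) ≤ ε/4 := by
    have hCe : C * η = ε/4 := by
      rw [hηdef]; field_simp
    nlinarith [hη.le]
  -- combine
  have hB1 := abs_le.mp B1
  have hB2 := abs_le.mp B2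
  have hB3 := abs_le.mp B3
  have hB4 := abs_le.mp B4
  have hB0 := abs_le.mp B0
  have hB0' := abs_le.mp B0'
  show |L m n f (x, y) - f (x, y)| < ε
  rw [abs_lt]
  constructor
  · -- lower: -ε < L f - f
    rw [idL] at hLL
    linarith only [hLL, hB1.1, hB2.1, hB3.1, hB4.1, hB0'.1, hCη, hε]
  · rw [idU] at hLU
    linarith only [hLU, hB1.1, hB2.1, hB3.1, hB4.1, hB0.2, hCη, hε]
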